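/- arXiv:2306.17013 — 3 statements merged into one kernel-verified Lean document; each statement's English description precedes it below -/
import Mathlib

section
/- Let d ≥ 1 and α, β ∈ ℝ with α + β > d and α < d. Then for every n ∈ ℤ^d, the sum over all decompositions n = n₁ + n₂ of ⟨n₁⟩^{-α}⟨n₂⟩^{-β} is bounded by a constant times ⟨n⟩^{-α+λ}, where λ = max(d - β, 0) if β ≠ d, and λ can be taken to be any ε > 0 if β = d. -/
/-!
Put `N = ⟨n⟩` and split the sum into the regions `⟨m⟩ ≤ N/2`, `⟨n - m⟩ ≤ N/2` and the rest.
By the triangle inequality `⟨a + b⟩ ≤ ⟨a⟩ + ⟨b⟩`, on the first region `⟨n - m⟩^{-β} ≲ N^{-β}`, on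
the second `⟨m⟩^{-α} ≲ N^{-α}`, and on the third the summand is `≲ ⟨m⟩^{-(α+β)}` with `⟨m⟩ > N/2`.
What remains are the lattice bounds `∑_{⟨m⟩ ≤ R} ⟨m⟩^{-γ} ≲ R^{d-γ}` for `γ < d` and
`∑_{⟨m⟩ > R} ⟨m⟩^{-γ} ≲ R^{d-γ}` for `γ > d`: cut `ℤ^d` into the dyadic shells
`2^j ≤ ⟨m⟩ < 2^{j+1}`, each of at most `2^{(j+3)d}` points, and sum a geometric series. When
`β ≥ d`, the ball sum of `⟨m⟩^{-β}` is at most `R^λ` times the convergent sum of `⟨m⟩^{-(β+λ)}`.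
-/

/-- Japanese bracket `⟨n⟩ = (1 + |n|²)^{1/2}` of a lattice point `n ∈ ℤ^d`. -/
noncomputable def jb {d : ℕ} (n : Fin d → ℤ) : ℝ :=
  Real.sqrt (1 + ∑ i, (n i : ℝ) ^ 2)

open scoped ENNReal NNReal

lemma rpow_le_mul_rpow_of_div_le {a b c e : ℝ} (hb : 0 < b) (hc : 0 < c) (h : b / c ≤ a)
    (he : e ≤ 0) : a ^ e ≤ c ^ (-e) * b ^ e := by
  calc a ^ e ≤ (b / c) ^ e := Real.rpow_le_rpow_of_nonpos (by positivity) h he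
    _ = c ^ (-e) * b ^ e := by
      rw [Real.div_rpow hb.le hc.le, div_eq_mul_inv, ← Real.rpow_neg hc.le, mul_comm]

lemma rpow_le_mul_rpow_of_div_le_of_le_mul {a b c e : ℝ} (hb : 0 < b) (hc : 1 ≤ c)
    (h₁ : b / c ≤ a) (h₂ : a ≤ c * b) : a ^ e ≤ c ^ |e| * b ^ e := by
  rcases le_total 0 e with he | he
  · calc a ^ e ≤ (c * b) ^ e := Real.rpow_le_rpow ((by positivity : 0 ≤ b / c).trans h₁) h₂ he
      _ = c ^ |e| * b ^ e := by rw [Real.mul_rpow (by linarith) hb.le, abs_of_nonneg he]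
  · rw [abs_of_nonpos he]
    exact rpow_le_mul_rpow_of_div_le hb (by linarith) h₁ he

lemma tsum_ofReal_le_ofReal_mul_tsum {ι : Type*} {f g : ι → ℝ} {c : ℝ} (hc : 0 ≤ c)
    (h : ∀ i, f i ≤ c * g i) :
    ∑' i, ENNReal.ofReal (f i) ≤ ENNReal.ofReal c * ∑' i, ENNReal.ofReal (g i) := by
  rw [← ENNReal.tsum_mul_left]
  exact ENNReal.tsum_le_tsum fun i =>
    (ENNReal.ofReal_le_ofReal (h i)).trans_eq (ENNReal.ofReal_mul hc)

lemma tsum_le_mul_of_tsum_ofReal_le {ι : Type*} {f : ι → ℝ} {K : ℝ≥0} {x : ℝ}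
    (hf : ∀ i, 0 ≤ f i) (hx : 0 ≤ x) (h : ∑' i, ENNReal.ofReal (f i) ≤ K * ENNReal.ofReal x) :
    ∑' i, f i ≤ K * x := by
  have hKx : 0 ≤ (K : ℝ) * x := mul_nonneg K.coe_nonneg hx
  refine tsum_le_of_sum_le' hKx fun s => (ENNReal.ofReal_le_ofReal_iff hKx).mp ?_
  rw [ENNReal.ofReal_sum_of_nonneg fun i _ => hf i, ENNReal.ofReal_mul K.coe_nonneg,
    ENNReal.ofReal_coe_nnreal]
  exact (ENNReal.sum_le_tsum s).trans h

lemma tsum_le_tsum_add_tsum_add_tsum {ι : Type*} (f : ι → ℝ≥0∞) {s t u : Set ι}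
    (h : Set.univ ⊆ s ∪ t ∪ u) : ∑' i, f i ≤ ∑' i : s, f i + ∑' i : t, f i + ∑' i : u, f i :=
  calc ∑' i, f i = ∑' i : (Set.univ : Set ι), f i := (tsum_univ f).symm
    _ ≤ ∑' i : ↑(s ∪ t ∪ u), f i := ENNReal.tsum_mono_subtype f h
    _ ≤ _ := (ENNReal.tsum_union_le f _ _).trans (add_le_add (ENNReal.tsum_union_le f s t) le_rfl)

lemma tsum_two_pow_rpow_le_of_pos {s : ℝ} (hs : 0 < s) :
    ∃ K : ℝ≥0, ∀ R : ℝ, 1 ≤ R →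
      ∑' j : {j : ℕ | (2 : ℝ) ^ j ≤ R}, ENNReal.ofReal (((2 : ℝ) ^ (j : ℕ)) ^ s) ≤
        K * ENNReal.ofReal (R ^ s) := by
  set q : ℝ := 2 ^ s with hq_def
  have hq : 1 < q := Real.one_lt_rpow one_lt_two hs
  refine ⟨(q / (q - 1)).toNNReal, fun R hR => ?_⟩
  obtain ⟨J, hJR, hRJ⟩ := exists_nat_pow_near hR one_lt_two
  have hsub : {j : ℕ | (2 : ℝ) ^ j ≤ R} ⊆ Finset.range (J + 1) := fun j hj =>
    Finset.mem_range.mpr ((pow_lt_pow_iff_right₀ one_lt_two).mp (hj.trans_lt hRJ))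
  have hgeom : ∑ j ∈ Finset.range (J + 1), q ^ j ≤ q / (q - 1) * R ^ s := by
    have hqJ : q ^ J ≤ R ^ s := by
      rw [hq_def, Real.rpow_pow_comm zero_le_two]
      exact Real.rpow_le_rpow (by positivity) hJR hs.le
    have hq1 : 0 < q - 1 := sub_pos.mpr hq
    rw [geom_sum_eq hq.ne', div_le_iff₀ hq1]
    calc q ^ (J + 1) - 1 ≤ q * q ^ J := by rw [pow_succ']; linarith
      _ ≤ q * R ^ s := by gcongr
      _ = q / (q - 1) * R ^ s * (q - 1) := by field_simp
  calc _ ≤ ∑' j : (Finset.range (J + 1) : Set ℕ), ENNReal.ofReal (((2 : ℝ) ^ (j : ℕ)) ^ s) :=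
        ENNReal.tsum_mono_subtype (fun j : ℕ => ENNReal.ofReal (((2 : ℝ) ^ j) ^ s)) hsub
    _ = ENNReal.ofReal (∑ j ∈ Finset.range (J + 1), q ^ j) := by
        rw [Finset.tsum_subtype' (Finset.range (J + 1))
            fun j : ℕ => ENNReal.ofReal (((2 : ℝ) ^ j) ^ s),
          ENNReal.ofReal_sum_of_nonneg fun j _ => by positivity]
        simp_rw [hq_def, Real.rpow_pow_comm zero_le_two]
    _ ≤ ENNReal.ofReal (q / (q - 1) * R ^ s) := ENNReal.ofReal_le_ofReal hgeom
    _ = _ := ENNReal.ofReal_mul (by positivity)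

lemma tsum_two_pow_rpow_le_of_neg {s : ℝ} (hs : s < 0) :
    ∃ K : ℝ≥0, ∀ R : ℝ, 0 < R →
      ∑' j : {j : ℕ | R < 2 ^ (j + 1)}, ENNReal.ofReal (((2 : ℝ) ^ (j : ℕ)) ^ s) ≤
        K * ENNReal.ofReal (R ^ s) := by
  set q : ℝ := 2 ^ s with hq_def
  have hq0 : 0 < q := by positivity
  have hq1 : q < 1 := Real.rpow_lt_one_of_one_lt_of_neg one_lt_two hs
  refine ⟨(2 ^ (-s) * (1 - q)⁻¹).toNNReal, fun R hR => ?_⟩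
  -- `J` is the dyadic scale of `max R 1`, so that `J = 0` when `R < 1`
  obtain ⟨J, hJR, hRJ⟩ := exists_nat_pow_near (le_max_right R 1) one_lt_two
  have hsub : {j : ℕ | R < 2 ^ (j + 1)} ⊆ Set.range (J + ·) := by
    intro j (hj : R < 2 ^ (j + 1))
    refine ⟨j - J, Nat.add_sub_of_le (not_lt.mp fun hjJ => ?_)⟩
    have hR1 : R < 1 := by
      simpa using lt_max_iff.mp (hj.trans_le ((pow_le_pow_right₀ one_le_two hjJ).trans hJR))
    rw [max_eq_right hR1.le] at hJR
    exact absurd hJR (not_le.mpr (one_lt_pow₀ one_lt_two (by omega)))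
  have hqJ : q ^ J ≤ 2 ^ (-s) * R ^ s := by
    rw [hq_def, Real.rpow_pow_comm zero_le_two]
    refine rpow_le_mul_rpow_of_div_le hR two_pos ?_ hs.le
    rw [div_le_iff₀ two_pos, ← pow_succ]
    exact ((le_max_left R 1).trans_lt hRJ).le
  calc _ ≤ ∑' j : Set.range (J + ·), ENNReal.ofReal (((2 : ℝ) ^ (j : ℕ)) ^ s) :=
        ENNReal.tsum_mono_subtype (fun j : ℕ => ENNReal.ofReal (((2 : ℝ) ^ j) ^ s)) hsub
    _ = ∑' k : ℕ, ENNReal.ofReal (q ^ J) * ENNReal.ofReal (q ^ k) := by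
        rw [tsum_range (fun j : ℕ => ENNReal.ofReal (((2 : ℝ) ^ j) ^ s)) (add_right_injective J)]
        simp_rw [← Real.rpow_pow_comm zero_le_two, ← hq_def, pow_add]
        exact tsum_congr fun k => ENNReal.ofReal_mul (by positivity)
    _ = ENNReal.ofReal (q ^ J * (1 - q)⁻¹) := by
        rw [ENNReal.tsum_mul_left, ← ENNReal.ofReal_tsum_of_nonneg (fun k => by positivity)
          (summable_geometric_of_lt_one hq0.le hq1), tsum_geometric_of_lt_one hq0.le hq1,
          ENNReal.ofReal_mul (by positivity)]
    _ ≤ ENNReal.ofReal (2 ^ (-s) * (1 - q)⁻¹ * R ^ s) := by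
        refine ENNReal.ofReal_le_ofReal ?_
        rw [mul_right_comm]
        gcongr
    _ = _ := ENNReal.ofReal_mul (by positivity)

section Lattice

variable {d : ℕ}

lemma sq_jb (n : Fin d → ℤ) : jb n ^ 2 = 1 + ∑ i, (n i : ℝ) ^ 2 :=
  Real.sq_sqrt (by positivity)

lemma one_le_jb (n : Fin d → ℤ) : 1 ≤ jb n :=
  Real.one_le_sqrt.mpr (le_add_of_nonneg_right (by positivity))

lemma jb_pos (n : Fin d → ℤ) : 0 < jb n :=
  one_pos.trans_le (one_le_jb n)

lemma abs_le_jb (n : Fin d → ℤ) (i : Fin d) : |(n i : ℝ)| ≤ jb n := by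
  rw [← Real.sqrt_sq_eq_abs]
  exact Real.sqrt_le_sqrt ((Finset.single_le_sum (fun j _ => sq_nonneg (n j : ℝ))
    (Finset.mem_univ i)).trans (le_add_of_nonneg_left zero_le_one))

lemma jb_neg (n : Fin d → ℤ) : jb (-n) = jb n := by
  simp [jb]

lemma jb_add_le (a b : Fin d → ℤ) : jb (a + b) ≤ jb a + jb b := by
  have cauchy_schwarz : ∑ i, (a i : ℝ) * b i ≤ jb a * jb b :=
    (Real.sum_mul_le_sqrt_mul_sqrt _ _ _).trans <|
      mul_le_mul (Real.sqrt_le_sqrt (by linarith)) (Real.sqrt_le_sqrt (by linarith))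
        (Real.sqrt_nonneg _) (jb_pos a).le
  refine (pow_le_pow_iff_left₀ (jb_pos _).le (add_pos (jb_pos a) (jb_pos b)).le
    two_ne_zero).mp ?_
  rw [add_sq, sq_jb, sq_jb, sq_jb]
  have cross : ∑ i, 2 * (a i : ℝ) * b i = 2 * ∑ i, (a i : ℝ) * b i := by
    rw [Finset.mul_sum]; simp only [mul_assoc]
  simp only [Pi.add_apply, Int.cast_add, add_sq, Finset.sum_add_distrib, cross]
  linarith

lemma jb_le_add_jb_sub (n m : Fin d → ℤ) : jb n ≤ jb m + jb (n - m) := by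
  simpa using jb_add_le m (n - m)

lemma jb_le_jb_add_jb_sub (n m : Fin d → ℤ) : jb m ≤ jb n + jb (n - m) := by
  have h := jb_add_le n (m - n)
  rwa [add_sub_cancel, ← neg_sub, jb_neg] at h

noncomputable def shell (m : Fin d → ℤ) : ℕ := Nat.log 2 ⌊jb m⌋₊

lemma two_pow_shell_le (m : Fin d → ℤ) : (2 : ℝ) ^ shell m ≤ jb m :=
  calc (2 : ℝ) ^ shell m = ((2 ^ shell m : ℕ) : ℝ) := by push_cast; rfl
    _ ≤ ⌊jb m⌋₊ := Nat.cast_le.mpr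
      (Nat.pow_log_le_self 2 (Nat.floor_pos.mpr (one_le_jb m)).ne')
    _ ≤ jb m := Nat.floor_le (jb_pos m).le

lemma jb_lt_two_pow_shell_succ (m : Fin d → ℤ) : jb m < 2 ^ (shell m + 1) :=
  calc jb m < ⌊jb m⌋₊ + 1 := Nat.lt_floor_add_one _
    _ ≤ ((2 ^ (shell m + 1) : ℕ) : ℝ) := by
      exact_mod_cast Nat.lt_pow_succ_log_self one_lt_two _
    _ = 2 ^ (shell m + 1) := by push_cast; rfl

lemma encard_shell_le (j : ℕ) : (shell ⁻¹' {j} : Set (Fin d → ℤ)).encard ≤ 2 ^ ((j + 3) * d) := by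
  let cube : Finset (Fin d → ℤ) :=
    Fintype.piFinset fun _ => Finset.Icc (-2 ^ (j + 1)) (2 ^ (j + 1))
  have hsub : shell ⁻¹' {j} ⊆ (cube : Set (Fin d → ℤ)) := by
    intro m hm
    rw [Finset.mem_coe, Fintype.mem_piFinset]
    intro i
    have : |(m i : ℝ)| < 2 ^ (j + 1) :=
      (abs_le_jb m i).trans_lt (hm ▸ jb_lt_two_pow_shell_succ m)
    rw [Finset.mem_Icc, ← abs_le]
    exact_mod_cast this.le
  have hcard : cube.card = (2 ^ (j + 2) + 1) ^ d := by
    simp only [cube, Fintype.card_piFinset, Int.card_Icc, Finset.prod_const, Finset.card_univ,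
      Fintype.card_fin]
    congr
    rw [show (2 : ℤ) ^ (j + 1) + 1 - -2 ^ (j + 1) = ((2 ^ (j + 2) + 1 : ℕ) : ℤ) by push_cast; ring,
      Int.toNat_natCast]
  calc _ ≤ (cube : Set (Fin d → ℤ)).encard := Set.encard_le_encard hsub
    _ = ((2 ^ (j + 2) + 1) ^ d : ℕ) := by rw [Set.encard_coe_eq_coe_finsetCard, hcard]
    _ ≤ ((2 ^ (j + 3)) ^ d : ℕ) := by
      gcongr
      rw [pow_succ 2 (j + 2)]
      have := Nat.one_le_two_pow (n := j + 2)
      omega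
    _ = 2 ^ ((j + 3) * d) := by rw [← pow_mul]; push_cast; rfl

lemma tsum_shell_jb_rpow_le (γ : ℝ) (j : ℕ) :
    ∑' m : (shell ⁻¹' {j} : Set (Fin d → ℤ)), ENNReal.ofReal (jb (m : Fin d → ℤ) ^ (-γ)) ≤
      ENNReal.ofReal (2 ^ (3 * d) * 2 ^ |γ|) * ENNReal.ofReal (((2 : ℝ) ^ j) ^ ((d : ℝ) - γ)) := by
  have hj : (0 : ℝ) < 2 ^ j := by positivity
  have hterm : ∀ m : (shell ⁻¹' {j} : Set (Fin d → ℤ)),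
      jb (m : Fin d → ℤ) ^ (-γ) ≤ 2 ^ |γ| * ((2 : ℝ) ^ j) ^ (-γ) := by
    rintro ⟨m, rfl : shell m = j⟩
    rw [← abs_neg γ]
    refine rpow_le_mul_rpow_of_div_le_of_le_mul hj one_le_two
      ((div_le_self hj.le one_le_two).trans (two_pow_shell_le m)) ?_
    rw [← pow_succ']
    exact (jb_lt_two_pow_shell_succ m).le
  calc _ ≤ ∑' _ : (shell ⁻¹' {j} : Set (Fin d → ℤ)),
        ENNReal.ofReal (2 ^ |γ| * ((2 : ℝ) ^ j) ^ (-γ)) :=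
      ENNReal.tsum_le_tsum fun m => ENNReal.ofReal_le_ofReal (hterm m)
    _ = (shell ⁻¹' {j} : Set (Fin d → ℤ)).encard *
        ENNReal.ofReal (2 ^ |γ| * ((2 : ℝ) ^ j) ^ (-γ)) := ENNReal.tsum_set_const _ _
    _ ≤ ((2 ^ ((j + 3) * d) : ℕ) : ℝ≥0∞) * ENNReal.ofReal (2 ^ |γ| * ((2 : ℝ) ^ j) ^ (-γ)) := by
      gcongr
      exact_mod_cast encard_shell_le j
    _ = _ := by
      rw [← ENNReal.ofReal_natCast, ← ENNReal.ofReal_mul (by positivity),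
        ← ENNReal.ofReal_mul (by positivity)]
      congr 1
      rw [Real.rpow_sub hj, Real.rpow_natCast, Real.rpow_neg hj.le]
      push_cast
      field_simp
      ring

lemma tsum_jb_rpow_le_of_mapsTo (γ : ℝ) {s : Set (Fin d → ℤ)} {t : Set ℕ}
    (hst : Set.MapsTo shell s t) :
    ∑' m : s, ENNReal.ofReal (jb (m : Fin d → ℤ) ^ (-γ)) ≤ ENNReal.ofReal (2 ^ (3 * d) * 2 ^ |γ|) *
      ∑' j : t, ENNReal.ofReal (((2 : ℝ) ^ (j : ℕ)) ^ ((d : ℝ) - γ)) := by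
  let f : (Fin d → ℤ) → ℝ≥0∞ := fun m => ENNReal.ofReal (jb m ^ (-γ))
  let shellOf (j : ℕ) : Set (Fin d → ℤ) := shell ⁻¹' {j}
  have hcover : s ⊆ ⋃ j ∈ t, shellOf j := fun m hm => Set.mem_biUnion (hst hm) rfl
  calc ∑' m : s, f m ≤ ∑' m : ⋃ j ∈ t, shellOf j, f m := ENNReal.tsum_mono_subtype f hcover
    _ ≤ ∑' j : t, ∑' m : shellOf j, f m := ENNReal.tsum_biUnion_le_tsum f t shellOf
    _ ≤ ∑' j : t, ENNReal.ofReal (2 ^ (3 * d) * 2 ^ |γ|) *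
          ENNReal.ofReal (((2 : ℝ) ^ (j : ℕ)) ^ ((d : ℝ) - γ)) :=
        ENNReal.tsum_le_tsum fun j => tsum_shell_jb_rpow_le γ j
    _ = _ := ENNReal.tsum_mul_left

def BallBound (d : ℕ) (γ s : ℝ) : Prop :=
  ∃ K : ℝ≥0, ∀ R : ℝ, 1 ≤ R →
    ∑' m : {m : Fin d → ℤ | jb m ≤ R}, ENNReal.ofReal (jb (m : Fin d → ℤ) ^ (-γ)) ≤
      K * ENNReal.ofReal (R ^ s)

lemma ballBound_of_lt {γ : ℝ} (hγ : γ < d) : BallBound d γ (d - γ) := by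
  obtain ⟨K, hK⟩ := tsum_two_pow_rpow_le_of_pos (sub_pos.mpr hγ)
  refine ⟨Real.toNNReal (2 ^ (3 * d) * 2 ^ |γ|) * K, fun R hR => ?_⟩
  calc _ ≤ ENNReal.ofReal (2 ^ (3 * d) * 2 ^ |γ|) *
        ∑' j : {j : ℕ | (2 : ℝ) ^ j ≤ R}, ENNReal.ofReal (((2 : ℝ) ^ (j : ℕ)) ^ ((d : ℝ) - γ)) :=
      tsum_jb_rpow_le_of_mapsTo γ fun m hm => (two_pow_shell_le m).trans hm
    _ ≤ ENNReal.ofReal (2 ^ (3 * d) * 2 ^ |γ|) * (K * ENNReal.ofReal (R ^ ((d : ℝ) - γ))) := by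
      gcongr
      exact hK R hR
    _ = _ := by rw [ENNReal.coe_mul, mul_assoc]; rfl

lemma tsum_jb_gt_rpow_le {γ : ℝ} (hγ : d < γ) :
    ∃ K : ℝ≥0, ∀ R : ℝ, 0 < R →
      ∑' m : {m : Fin d → ℤ | R < jb m}, ENNReal.ofReal (jb (m : Fin d → ℤ) ^ (-γ)) ≤
        K * ENNReal.ofReal (R ^ ((d : ℝ) - γ)) := by
  obtain ⟨K, hK⟩ := tsum_two_pow_rpow_le_of_neg (sub_neg.mpr hγ)
  refine ⟨Real.toNNReal (2 ^ (3 * d) * 2 ^ |γ|) * K, fun R hR => ?_⟩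
  calc _ ≤ ENNReal.ofReal (2 ^ (3 * d) * 2 ^ |γ|) *
        ∑' j : {j : ℕ | R < 2 ^ (j + 1)}, ENNReal.ofReal (((2 : ℝ) ^ (j : ℕ)) ^ ((d : ℝ) - γ)) :=
      tsum_jb_rpow_le_of_mapsTo γ fun m hm => lt_trans hm (jb_lt_two_pow_shell_succ m)
    _ ≤ ENNReal.ofReal (2 ^ (3 * d) * 2 ^ |γ|) * (K * ENNReal.ofReal (R ^ ((d : ℝ) - γ))) := by
      gcongr
      exact hK R hR
    _ = _ := by rw [ENNReal.coe_mul, mul_assoc]; rfl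

lemma ballBound_of_lt_add {γ t : ℝ} (ht : 0 ≤ t) (h : d < γ + t) : BallBound d γ t := by
  obtain ⟨K, hK⟩ := tsum_jb_gt_rpow_le h
  refine ⟨K * Real.toNNReal ((1 / 2) ^ ((d : ℝ) - (γ + t))), fun R hR => ?_⟩
  have hterm : ∀ m : {m : Fin d → ℤ | jb m ≤ R},
      jb (m : Fin d → ℤ) ^ (-γ) ≤ R ^ t * jb (m : Fin d → ℤ) ^ (-(γ + t)) := by
    rintro ⟨m, hm : jb m ≤ R⟩
    rw [show -γ = t + -(γ + t) by ring, Real.rpow_add (jb_pos m)]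
    exact mul_le_mul_of_nonneg_right (Real.rpow_le_rpow (jb_pos m).le hm ht)
      (Real.rpow_nonneg (jb_pos m).le _)
  calc _ ≤ ENNReal.ofReal (R ^ t) *
        ∑' m : {m : Fin d → ℤ | jb m ≤ R}, ENNReal.ofReal (jb (m : Fin d → ℤ) ^ (-(γ + t))) :=
      tsum_ofReal_le_ofReal_mul_tsum (by positivity) hterm
    _ ≤ ENNReal.ofReal (R ^ t) *
        ∑' m : {m : Fin d → ℤ | 1 / 2 < jb m},
          ENNReal.ofReal (jb (m : Fin d → ℤ) ^ (-(γ + t))) := by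
      gcongr
      exact ENNReal.tsum_mono_subtype (fun m => ENNReal.ofReal (jb m ^ (-(γ + t))))
        fun m _ => (one_half_lt_one.trans_le (one_le_jb m))
    _ ≤ ENNReal.ofReal (R ^ t) * (K * ENNReal.ofReal ((1 / 2) ^ ((d : ℝ) - (γ + t)))) := by
      gcongr
      exact hK _ one_half_pos
    _ = _ := by
      rw [ENNReal.coe_mul]
      change _ = _ * ENNReal.ofReal _ * _
      ring

section Convolution

variable {α β : ℝ}

lemma tsum_jb_le_half_le (hα : α < d) (hβ : 0 ≤ β) :
    ∃ K : ℝ≥0, ∀ n : Fin d → ℤ,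
      ∑' m : {m : Fin d → ℤ | jb m ≤ jb n / 2},
          ENNReal.ofReal (jb (m : Fin d → ℤ) ^ (-α) * jb (n - m : Fin d → ℤ) ^ (-β)) ≤
        K * ENNReal.ofReal (jb n ^ ((d : ℝ) - α - β)) := by
  obtain ⟨K, hK⟩ := ballBound_of_lt hα
  refine ⟨Real.toNNReal (2 ^ β) * K, fun n => ?_⟩
  have hN := jb_pos n
  have hterm : ∀ m : {m : Fin d → ℤ | jb m ≤ jb n / 2},
      jb (m : Fin d → ℤ) ^ (-α) * jb (n - m : Fin d → ℤ) ^ (-β) ≤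
        2 ^ β * jb n ^ (-β) * jb (m : Fin d → ℤ) ^ (-α) := by
    rintro ⟨m, hm : jb m ≤ jb n / 2⟩
    have hfar : jb n / 2 ≤ jb (n - m) := by linarith [jb_le_add_jb_sub n m]
    rw [mul_comm]
    refine mul_le_mul_of_nonneg_right ?_ (Real.rpow_nonneg (jb_pos m).le _)
    simpa using rpow_le_mul_rpow_of_div_le (jb_pos n) two_pos hfar (neg_nonpos.mpr hβ)
  calc _ ≤ ENNReal.ofReal (2 ^ β * jb n ^ (-β)) *
        ∑' m : {m : Fin d → ℤ | jb m ≤ jb n / 2}, ENNReal.ofReal (jb (m : Fin d → ℤ) ^ (-α)) :=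
      tsum_ofReal_le_ofReal_mul_tsum (mul_nonneg (by positivity) (Real.rpow_nonneg hN.le _)) hterm
    _ ≤ ENNReal.ofReal (2 ^ β * jb n ^ (-β)) *
        ∑' m : {m : Fin d → ℤ | jb m ≤ jb n}, ENNReal.ofReal (jb (m : Fin d → ℤ) ^ (-α)) := by
      gcongr
      exact ENNReal.tsum_mono_subtype (fun m => ENNReal.ofReal (jb m ^ (-α)))
        fun m (hm : jb m ≤ jb n / 2) => hm.trans (half_le_self (jb_pos n).le)
    _ ≤ ENNReal.ofReal (2 ^ β * jb n ^ (-β)) * (K * ENNReal.ofReal (jb n ^ ((d : ℝ) - α))) := by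
      gcongr
      exact hK _ (one_le_jb n)
    _ = _ := by
      rw [show (d : ℝ) - α - β = -β + (d - α) by ring, Real.rpow_add hN,
        ENNReal.ofReal_mul (by positivity), ENNReal.ofReal_mul (Real.rpow_nonneg hN.le _),
        ENNReal.coe_mul]
      change _ = ENNReal.ofReal _ * _ * _
      ring

lemma tsum_jb_sub_le_half_le {lam : ℝ} (hball : BallBound d β lam) :
    ∃ K : ℝ≥0, ∀ n : Fin d → ℤ,
      ∑' m : {m : Fin d → ℤ | jb (n - m) ≤ jb n / 2},
          ENNReal.ofReal (jb (m : Fin d → ℤ) ^ (-α) * jb (n - m : Fin d → ℤ) ^ (-β)) ≤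
        K * ENNReal.ofReal (jb n ^ (-α + lam)) := by
  obtain ⟨K, hK⟩ := hball
  refine ⟨Real.toNNReal (2 ^ |α|) * K, fun n => ?_⟩
  have hN := jb_pos n
  have hterm : ∀ m : {m : Fin d → ℤ | jb (n - m) ≤ jb n / 2},
      jb (m : Fin d → ℤ) ^ (-α) * jb (n - m : Fin d → ℤ) ^ (-β) ≤
        2 ^ |α| * jb n ^ (-α) * jb (n - m : Fin d → ℤ) ^ (-β) := by
    rintro ⟨m, hm : jb (n - m) ≤ jb n / 2⟩
    have hlow : jb n / 2 ≤ jb m := by linarith [jb_le_add_jb_sub n m]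
    have hup : jb m ≤ 2 * jb n := by linarith [jb_le_jb_add_jb_sub n m, jb_pos n]
    refine mul_le_mul_of_nonneg_right ?_ (Real.rpow_nonneg (jb_pos _).le _)
    rw [← abs_neg]
    exact rpow_le_mul_rpow_of_div_le_of_le_mul (jb_pos n) one_le_two hlow hup
  have hinj : Function.Injective fun m : {m : Fin d → ℤ | jb (n - m) ≤ jb n / 2} =>
      (⟨n - m, m.2.trans (half_le_self (jb_pos n).le)⟩ : {k : Fin d → ℤ | jb k ≤ jb n}) :=
    fun a b hab => Subtype.ext (sub_right_injective (congrArg Subtype.val hab))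
  calc _ ≤ ENNReal.ofReal (2 ^ |α| * jb n ^ (-α)) *
        ∑' m : {m : Fin d → ℤ | jb (n - m) ≤ jb n / 2},
          ENNReal.ofReal (jb (n - m : Fin d → ℤ) ^ (-β)) :=
      tsum_ofReal_le_ofReal_mul_tsum (mul_nonneg (by positivity) (Real.rpow_nonneg hN.le _)) hterm
    _ ≤ ENNReal.ofReal (2 ^ |α| * jb n ^ (-α)) *
        ∑' k : {k : Fin d → ℤ | jb k ≤ jb n}, ENNReal.ofReal (jb (k : Fin d → ℤ) ^ (-β)) := by
      gcongr
      exact ENNReal.tsum_comp_le_tsum_of_injective hinj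
        fun k : {k : Fin d → ℤ | jb k ≤ jb n} => ENNReal.ofReal (jb (k : Fin d → ℤ) ^ (-β))
    _ ≤ ENNReal.ofReal (2 ^ |α| * jb n ^ (-α)) * (K * ENNReal.ofReal (jb n ^ lam)) := by
      gcongr
      exact hK _ (one_le_jb n)
    _ = _ := by
      rw [Real.rpow_add hN, ENNReal.ofReal_mul (by positivity),
        ENNReal.ofReal_mul (Real.rpow_nonneg hN.le _), ENNReal.coe_mul]
      change _ = ENNReal.ofReal _ * _ * _
      ring

lemma tsum_half_lt_jb_le (hαβ : d < α + β) (hβ : 0 ≤ β) :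
    ∃ K : ℝ≥0, ∀ n : Fin d → ℤ,
      ∑' m : {m : Fin d → ℤ | jb n / 2 < jb m ∧ jb n / 2 < jb (n - m)},
          ENNReal.ofReal (jb (m : Fin d → ℤ) ^ (-α) * jb (n - m : Fin d → ℤ) ^ (-β)) ≤
        K * ENNReal.ofReal (jb n ^ ((d : ℝ) - α - β)) := by
  obtain ⟨K, hK⟩ := tsum_jb_gt_rpow_le hαβ
  refine ⟨Real.toNNReal (3 ^ β * 2 ^ (α + β - d)) * K, fun n => ?_⟩
  have hterm : ∀ m : {m : Fin d → ℤ | jb n / 2 < jb m ∧ jb n / 2 < jb (n - m)},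
      jb (m : Fin d → ℤ) ^ (-α) * jb (n - m : Fin d → ℤ) ^ (-β) ≤
        3 ^ β * jb (m : Fin d → ℤ) ^ (-(α + β)) := by
    rintro ⟨m, -, hm⟩
    have hfar : jb m / 3 ≤ jb (n - m) := by linarith [jb_le_jb_add_jb_sub n m]
    have h := rpow_le_mul_rpow_of_div_le (jb_pos m) three_pos hfar (neg_nonpos.mpr hβ)
    rw [neg_neg] at h
    calc jb m ^ (-α) * jb (n - m) ^ (-β) ≤ jb m ^ (-α) * (3 ^ β * jb m ^ (-β)) :=
          mul_le_mul_of_nonneg_left h (Real.rpow_nonneg (jb_pos m).le _)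
      _ = 3 ^ β * jb m ^ (-(α + β)) := by
          rw [neg_add, Real.rpow_add (jb_pos m)]
          ring
  calc _ ≤ ENNReal.ofReal (3 ^ β) *
        ∑' m : {m : Fin d → ℤ | jb n / 2 < jb m ∧ jb n / 2 < jb (n - m)},
          ENNReal.ofReal (jb (m : Fin d → ℤ) ^ (-(α + β))) :=
      tsum_ofReal_le_ofReal_mul_tsum (by positivity) hterm
    _ ≤ ENNReal.ofReal (3 ^ β) *
        ∑' m : {m : Fin d → ℤ | jb n / 2 < jb m},
          ENNReal.ofReal (jb (m : Fin d → ℤ) ^ (-(α + β))) := by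
      gcongr
      exact ENNReal.tsum_mono_subtype (fun m => ENNReal.ofReal (jb m ^ (-(α + β))))
        fun m hm => hm.1
    _ ≤ ENNReal.ofReal (3 ^ β) * (K * ENNReal.ofReal ((jb n / 2) ^ ((d : ℝ) - (α + β)))) := by
      gcongr
      exact hK _ (half_pos (jb_pos n))
    _ = _ := by
      rw [Real.div_rpow (jb_pos n).le zero_le_two, div_eq_mul_inv, ← Real.rpow_neg zero_le_two,
        neg_sub, show (d : ℝ) - (α + β) = d - α - β by ring,
        ENNReal.ofReal_mul (Real.rpow_nonneg (jb_pos n).le _), ENNReal.coe_mul]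
      change _ = ENNReal.ofReal (3 ^ β * 2 ^ (α + β - d)) * _ * _
      rw [ENNReal.ofReal_mul (by positivity)]
      ring

theorem tsum_jb_rpow_mul_jb_sub_rpow_le {lam : ℝ} (hαβ : d < α + β) (hα : α < d)
    (hlam : d - β ≤ lam) (hball : BallBound d β lam) :
    ∃ C : ℝ, 0 < C ∧ ∀ n : Fin d → ℤ,
      ∑' m : Fin d → ℤ, jb m ^ (-α) * jb (n - m) ^ (-β) ≤ C * jb n ^ (-α + lam) := by
  have hβ : 0 ≤ β := by linarith
  obtain ⟨K₁, h₁⟩ := tsum_jb_le_half_le hα hβ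
  obtain ⟨K₂, h₂⟩ := tsum_jb_sub_le_half_le (α := α) hball
  obtain ⟨K₃, h₃⟩ := tsum_half_lt_jb_le hαβ hβ
  refine ⟨K₁ + K₂ + K₃ + 1, by positivity, fun n => ?_⟩
  have hexp : ENNReal.ofReal (jb n ^ ((d : ℝ) - α - β)) ≤ ENNReal.ofReal (jb n ^ (-α + lam)) :=
    ENNReal.ofReal_le_ofReal (Real.rpow_le_rpow_of_exponent_le (one_le_jb n) (by linarith))
  have hcover : Set.univ ⊆ {m : Fin d → ℤ | jb m ≤ jb n / 2} ∪ {m | jb (n - m) ≤ jb n / 2} ∪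
      {m | jb n / 2 < jb m ∧ jb n / 2 < jb (n - m)} := by
    intro m _
    rcases le_or_gt (jb m) (jb n / 2) with h₁ | h₁
    · exact .inl (.inl h₁)
    rcases le_or_gt (jb (n - m)) (jb n / 2) with h₂ | h₂
    · exact .inl (.inr h₂)
    · exact .inr ⟨h₁, h₂⟩
  have hsum : ∑' m, ENNReal.ofReal (jb m ^ (-α) * jb (n - m) ^ (-β)) ≤
      (K₁ + K₂ + K₃ : ℝ≥0) * ENNReal.ofReal (jb n ^ (-α + lam)) := by
    refine (tsum_le_tsum_add_tsum_add_tsum _ hcover).trans ?_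
    push_cast
    rw [add_mul, add_mul]
    gcongr
    · exact (h₁ n).trans (by gcongr)
    · exact h₂ n
    · exact (h₃ n).trans (by gcongr)
  have hpow : 0 ≤ jb n ^ (-α + lam) := Real.rpow_nonneg (jb_pos n).le _
  calc _ ≤ ((K₁ + K₂ + K₃ : ℝ≥0) : ℝ) * jb n ^ (-α + lam) :=
        tsum_le_mul_of_tsum_ofReal_le (fun m => mul_nonneg (Real.rpow_nonneg (jb_pos m).le _)
          (Real.rpow_nonneg (jb_pos (n - m)).le _)) hpow hsum
    _ ≤ (K₁ + K₂ + K₃ + 1) * jb n ^ (-α + lam) := by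
        push_cast
        exact mul_le_mul_of_nonneg_right (le_add_of_nonneg_right zero_le_one) hpow

end Convolution

end Lattice

theorem stmt0_general (d : ℕ) (α β : ℝ)
    (hαβ : (d : ℝ) < α + β) (hα : α < (d : ℝ)) :
    (β ≠ (d : ℝ) → ∃ C : ℝ, 0 < C ∧ ∀ n : Fin d → ℤ,
      (∑' m : Fin d → ℤ, jb m ^ (-α) * jb (n - m) ^ (-β))
        ≤ C * jb n ^ (-α + max ((d : ℝ) - β) 0)) ∧
    (β = (d : ℝ) → ∀ ε : ℝ, 0 < ε → ∃ C : ℝ, 0 < C ∧ ∀ n : Fin d → ℤ,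
      (∑' m : Fin d → ℤ, jb m ^ (-α) * jb (n - m) ^ (-β))
        ≤ C * jb n ^ (-α + ε)) := by
  refine ⟨fun hβ => tsum_jb_rpow_mul_jb_sub_rpow_le hαβ hα (le_max_left _ _) ?_,
    fun hβ ε hε => tsum_jb_rpow_mul_jb_sub_rpow_le hαβ hα (by linarith)
      (ballBound_of_lt_add hε.le (by linarith))⟩
  rcases hβ.lt_or_gt with hlt | hgt
  · rw [max_eq_left (by linarith)]
    exact ballBound_of_lt hlt
  · rw [max_eq_right (by linarith)]
    exact ballBound_of_lt_add le_rfl (by linarith)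

/-- Discrete convolution estimate (Lemma on discrete convolutions). -/
theorem stmt0 (d : ℕ) (hd : 1 ≤ d) (α β : ℝ)
    (hαβ : (d : ℝ) < α + β) (hα : α < (d : ℝ)) :
    (β ≠ (d : ℝ) → ∃ C : ℝ, 0 < C ∧ ∀ n : Fin d → ℤ,
      (∑' m : Fin d → ℤ, jb m ^ (-α) * jb (n - m) ^ (-β))
        ≤ C * jb n ^ (-α + max ((d : ℝ) - β) 0)) ∧
    (β = (d : ℝ) → ∀ ε : ℝ, 0 < ε → ∃ C : ℝ, 0 < C ∧ ∀ n : Fin d → ℤ,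
      (∑' m : Fin d → ℤ, jb m ^ (-α) * jb (n - m) ^ (-β))
        ≤ C * jb n ^ (-α + ε)) :=
  stmt0_general d α β hαβ hα
end

section
/- Let g₁, …, g_{2n} be (not necessarily distinct) jointly Gaussian real random variables with mean zero. Then E[g₁⋯g_{2n}] = Σ Π_{k=1}^n E[g_{i_k} g_{j_k}], where the sum is over all partitions of {1,…,2n} into disjoint pairs (i_k, j_k). -/
/-!
For `c : Fin (2n) → ℝ` the variable `S = ∑ cᵢ gᵢ` is centred Gaussian, so integrating by parts
against the Gaussian density gives `E[S^(2n)] = (2n-1)‼ E[S²]ⁿ`. Expanding both sides, this is an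
identity between polynomials in `c`: on the left `∑_χ E[g_{χ 1} ⋯ g_{χ 2n}] c_{χ 1} ⋯ c_{χ 2n}`
over all maps `χ`, on the right `(2n-1)‼` times the `n`-th power of the quadratic form
`∑ E[gᵢ gⱼ] cᵢ cⱼ`. Compare the coefficients of the square-free monomial `c₁ ⋯ c_{2n}`. On the left
only bijective `χ` contribute, giving `(2n)! E[g₁ ⋯ g_{2n}]`. On the right the contributions are
indexed by bijections `Fin n × Bool ≃ Fin (2n)`, i.e. perfect matchings with an order on the pairs
and on each pair; every matching arises `2ⁿ n!` times. Since `(2n-1)‼ 2ⁿ n! = (2n)!`, the claim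
follows.
-/

open MeasureTheory ProbabilityTheory

open Classical in
noncomputable def pairPartitions (n : ℕ) : Finset (Finset (Finset (Fin (2 * n)))) :=
  Finset.univ.filter fun P =>
    (∀ p ∈ P, p.card = 2) ∧ P.sup id = Finset.univ ∧
      (P : Set (Finset (Fin (2 * n)))).PairwiseDisjoint id

open scoped NNReal Nat

lemma Nat.doubleFactorial_two_mul_sub_one_mul (n : ℕ) :
    (2 * n - 1)‼ * (2 ^ n * n !) = (2 * n)! := by
  cases n with
  | zero => rfl
  | succ n =>
    rw [← Nat.doubleFactorial_two_mul, show 2 * (n + 1) = 2 * n + 1 + 1 by ring,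
      Nat.factorial_eq_mul_doubleFactorial, Nat.add_sub_cancel, mul_comm]

namespace Equiv

variable {α β γ : Type*} [Finite γ]

lemma bijective_snd_of_fiberwise {τ : α × γ ≃ β × γ}
    (hτ : ∀ a b b', (τ (a, b)).1 = (τ (a, b')).1) (a : α) :
    Function.Bijective fun b => (τ (a, b)).2 :=
  Finite.injective_iff_bijective.mp fun b b' h =>
    (Prod.mk.inj (τ.injective (Prod.ext (hτ a b b') h))).2

lemma bijective_fst_of_fiberwise {τ : α × γ ≃ β × γ}
    (hτ : ∀ a b b', (τ (a, b)).1 = (τ (a, b')).1) (d : γ) :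
    Function.Bijective fun a => (τ (a, d)).1 := by
  refine ⟨fun a a' h => ?_, fun c => ⟨(τ.symm (c, d)).1, ?_⟩⟩
  · obtain ⟨b, hb⟩ := (bijective_snd_of_fiberwise hτ a).2 d
    obtain ⟨b', hb'⟩ := (bijective_snd_of_fiberwise hτ a').2 d
    have : τ (a, b) = τ (a', b') :=
      Prod.ext (by simp only [hτ a b d, hτ a' b' d, h]) (hb.trans hb'.symm)
    exact (Prod.mk.inj (τ.injective this)).1
  · dsimp only
    rw [hτ _ d (τ.symm (c, d)).2]
    simp

noncomputable def prodShearEquiv [Nonempty γ] :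
    (α ≃ β) × (α → Perm γ) ≃ {τ : α × γ ≃ β × γ // ∀ a b b', (τ (a, b)).1 = (τ (a, b')).1} where
  toFun σε := ⟨prodShear σε.1 σε.2, fun _ _ _ => rfl⟩
  invFun τ := (.ofBijective _ (bijective_fst_of_fiberwise τ.2 (Classical.arbitrary γ)),
    fun a => .ofBijective _ (bijective_snd_of_fiberwise τ.2 a))
  left_inv _ := Prod.ext (Equiv.ext fun _ => rfl) (funext fun _ => Equiv.ext fun _ => rfl)
  right_inv τ := Subtype.ext <| Equiv.ext fun _ => Prod.ext (τ.2 _ _ _) rfl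

end Equiv

lemma Multiset.toFinsupp_map_univ_val {κ ι : Type*} [Fintype κ] [DecidableEq ι] (χ : κ → ι) :
    toFinsupp (Finset.univ.val.map χ) = ∑ x, Finsupp.single (χ x) 1 := by
  rw [← Multiset.sum_map_singleton (Finset.univ.val.map χ), map_multiset_sum, Multiset.map_map,
    Multiset.map_map, Finset.sum_eq_multiset_sum]
  simp

lemma Finsupp.sum_single_one_eq_iff_bijective {κ ι : Type*} [Fintype κ] [Fintype ι]
    [DecidableEq ι] (χ : κ → ι) :
    ∑ x, single (χ x) 1 = ∑ i, single i 1 ↔ χ.Bijective := by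
  rw [← Multiset.toFinsupp_map_univ_val, ← Multiset.toFinsupp_map_univ_val,
    Multiset.toFinsupp.injective.eq_iff, Multiset.map_id', Multiset.bijective_iff_map_univ_eq_univ]

namespace MvPolynomial

variable {R κ ι : Type*} [CommSemiring R] [Fintype κ]

lemma C_mul_prod_X (c : R) (χ : κ → ι) :
    C c * ∏ x, X (χ x) = (monomial (∑ x, Finsupp.single (χ x) 1) c : MvPolynomial ι R) := by
  simp only [X, ← monomial_sum_one, C_mul_monomial, mul_one]

lemma coeff_sum_C_mul_prod_X [DecidableEq κ] [Fintype ι] [DecidableEq ι] (M : (κ → ι) → R) :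
    coeff (∑ i, Finsupp.single i 1) (∑ χ, C (M χ) * ∏ x, X (χ x)) = ∑ e : κ ≃ ι, M e := by
  simp only [coeff_sum, C_mul_prod_X, coeff_monomial, Finsupp.sum_single_one_eq_iff_bijective,
    ← Finset.sum_filter]
  rw [← Equiv.bijectiveEquiv.sum_comp]
  exact Finset.sum_subtype _ (by simp) _

lemma sum_C_mul_prod_X_pow [DecidableEq κ] [Fintype ι] (a : (κ → ι) → R) (n : ℕ) :
    (∑ ψ : κ → ι, C (a ψ) * ∏ b, X (ψ b)) ^ n =
      ∑ χ : Fin n × κ → ι, C (∏ k, a fun b => χ (k, b)) * ∏ x, X (χ x) := by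
  rw [← Fin.prod_const, Fintype.prod_sum, ← (Equiv.curry _ _ _).symm.sum_comp]
  simp [Finset.prod_mul_distrib, Fintype.prod_prod_type]

end MvPolynomial

section PairPartitions

open Finset

variable {ν α : Type*} [DecidableEq α]

def pairBlock (e : ν × Bool ≃ α) (k : ν) : Finset α :=
  univ.image fun b => e (k, b)

def pairBlocks [Fintype ν] (e : ν × Bool ≃ α) : Finset (Finset α) :=
  univ.image (pairBlock e)

lemma mem_pairBlock_iff (e : ν × Bool ≃ α) (k : ν) (i : α) :
    i ∈ pairBlock e k ↔ (e.symm i).1 = k := by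
  simp only [pairBlock, mem_image, mem_univ, true_and]
  constructor
  · rintro ⟨b, rfl⟩
    simp
  · intro h
    exact ⟨(e.symm i).2, by rw [← h]; simp⟩

lemma prod_pairBlock {M : Type*} [CommMonoid M] (e : ν × Bool ≃ α) (k : ν) (f : α → M) :
    ∏ i ∈ pairBlock e k, f i = ∏ b, f (e (k, b)) :=
  prod_image fun _ _ _ _ h => (Prod.mk.inj (e.injective h)).2

lemma card_pairBlock (e : ν × Bool ≃ α) (k : ν) : #(pairBlock e k) = 2 := by
  rw [pairBlock, card_image_of_injective _ fun _ _ h => (Prod.mk.inj (e.injective h)).2,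
    card_univ, Fintype.card_bool]

lemma injective_pairBlock (e : ν × Bool ≃ α) : Function.Injective (pairBlock e) := by
  intro k k' h
  have : e (k, false) ∈ pairBlock e k' := by
    rw [← h, mem_pairBlock_iff]
    simp
  simpa using (mem_pairBlock_iff e k' _).mp this

lemma prod_pairBlocks [Fintype ν] {M : Type*} [CommMonoid M] (e : ν × Bool ≃ α) (f : Finset α → M) :
    ∏ p ∈ pairBlocks e, f p = ∏ k, f (pairBlock e k) :=
  prod_image fun _ _ _ _ h => injective_pairBlock e h

lemma card_pairBlocks [Fintype ν] (e : ν × Bool ≃ α) : #(pairBlocks e) = Fintype.card ν := by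
  rw [pairBlocks, card_image_of_injective _ (injective_pairBlock e), card_univ]

variable {n : ℕ} {P : Finset (Finset (Fin (2 * n)))}

lemma mem_pairPartitions :
    P ∈ pairPartitions n ↔ (∀ p ∈ P, #p = 2) ∧ P.sup id = univ ∧
      (P : Set (Finset (Fin (2 * n)))).PairwiseDisjoint id := by
  simp [pairPartitions]

lemma pairBlocks_mem_pairPartitions (e : Fin n × Bool ≃ Fin (2 * n)) :
    pairBlocks e ∈ pairPartitions n := by
  refine mem_pairPartitions.mpr ⟨?_, ?_, ?_⟩
  · simp only [pairBlocks, mem_image, mem_univ, true_and, forall_exists_index,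
      forall_apply_eq_imp_iff]
    exact card_pairBlock e
  · refine eq_univ_of_forall fun i => mem_sup.mpr ⟨pairBlock e (e.symm i).1, ?_, ?_⟩
    · exact mem_image_of_mem _ (mem_univ _)
    · exact (mem_pairBlock_iff e _ i).mpr rfl
  · simp only [pairBlocks, coe_image, coe_univ, Set.image_univ]
    rintro _ ⟨k, rfl⟩ _ ⟨k', rfl⟩ hne
    refine disjoint_left.mpr fun i hk hk' => hne ?_
    rw [id, mem_pairBlock_iff] at hk hk'
    rw [← hk, ← hk']

lemma eq_of_mem_of_mem_pairPartitions (hP : P ∈ pairPartitions n) {p q : Finset (Fin (2 * n))}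
    (hp : p ∈ P) (hq : q ∈ P) {i : Fin (2 * n)} (hip : i ∈ p) (hiq : i ∈ q) : p = q := by
  by_contra hpq
  exact disjoint_left.mp ((mem_pairPartitions.mp hP).2.2 hp hq hpq) hip hiq

lemma exists_equiv_prod_bool_of_mem_pairPartitions (hP : P ∈ pairPartitions n) :
    ∃ E : Fin (2 * n) ≃ P × Bool, ∀ i, i ∈ ((E i).1 : Finset (Fin (2 * n))) := by
  have hcover (i : Fin (2 * n)) : ∃ p : P, i ∈ (p : Finset (Fin (2 * n))) := by
    obtain ⟨p, hp, hip⟩ := mem_sup.mp ((mem_pairPartitions.mp hP).2.1 ▸ mem_univ i)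
    exact ⟨⟨p, hp⟩, hip⟩
  choose f hf using hcover
  have hfiber (p : P) : Fintype.card {i // f i = p} = Fintype.card Bool := by
    have hiff (i : Fin (2 * n)) : f i = p ↔ i ∈ (p : Finset (Fin (2 * n))) :=
      ⟨fun h => h ▸ hf i, fun h => Subtype.ext
        (eq_of_mem_of_mem_pairPartitions hP (f i).2 p.2 (hf i) h)⟩
    rw [Fintype.card_congr (Equiv.subtypeEquivRight hiff), Fintype.card_coe,
      (mem_pairPartitions.mp hP).1 p p.2, Fintype.card_bool]
  exact ⟨(Equiv.sigmaFiberEquiv f).symm.trans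
    ((Equiv.sigmaCongrRight fun p => Fintype.equivOfCardEq (hfiber p)).trans
      (Equiv.sigmaEquivProd _ _)), hf⟩

lemma pairBlocks_eq_iff (hP : P ∈ pairPartitions n) {E : Fin (2 * n) ≃ P × Bool}
    (hE : ∀ i, i ∈ ((E i).1 : Finset (Fin (2 * n)))) (hcard : #P = n)
    (e : Fin n × Bool ≃ Fin (2 * n)) :
    pairBlocks e = P ↔ ∀ k b b', (E (e (k, b))).1 = (E (e (k, b'))).1 := by
  constructor
  · rintro rfl k b b'
    have hk : pairBlock e k ∈ pairBlocks e := mem_image_of_mem _ (mem_univ k)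
    have h (b : Bool) : (E (e (k, b))).1 = ⟨_, hk⟩ := Subtype.ext <|
      eq_of_mem_of_mem_pairPartitions hP (E _).1.2 hk (hE _) (mem_image_of_mem _ (mem_univ b))
    rw [h, h]
  · intro h
    refine eq_of_subset_of_card_le (fun p hp => ?_) (by rw [hcard, card_pairBlocks,
      Fintype.card_fin])
    obtain ⟨k, -, rfl⟩ := mem_image.mp hp
    have hsub : pairBlock e k ⊆ (E (e (k, false))).1 := by
      intro i hi
      obtain ⟨b, -, rfl⟩ := mem_image.mp hi
      exact h k b false ▸ hE _
    rw [eq_of_subset_of_card_le hsub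
      (by rw [card_pairBlock, (mem_pairPartitions.mp hP).1 _ (E _).1.2])]
    exact (E _).1.2

/-- Through a labelling `E` of the points by their block and a position in it, the bijections
inducing `P` become the fibre-preserving equivalences `Fin n × Bool ≃ P × Bool`, i.e. the shears
by some `Fin n ≃ P` and `n` permutations of `Bool`. -/
lemma card_filter_pairBlocks_eq (hP : P ∈ pairPartitions n) :
    #{e : Fin n × Bool ≃ Fin (2 * n) | pairBlocks e = P} = 2 ^ n * n ! := by
  obtain ⟨E, hE⟩ := exists_equiv_prod_bool_of_mem_pairPartitions hP
  have hcard : Fintype.card P = n := by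
    have := Fintype.card_congr E
    rw [Fintype.card_prod, Fintype.card_fin, Fintype.card_bool] at this
    omega
  calc #{e : Fin n × Bool ≃ Fin (2 * n) | pairBlocks e = P}
      = Fintype.card {e : Fin n × Bool ≃ Fin (2 * n) //
          ∀ k b b', (E (e (k, b))).1 = (E (e (k, b'))).1} := by
        rw [Fintype.card_subtype]
        exact congrArg card
          (filter_congr fun e _ => pairBlocks_eq_iff hP hE (by simpa using hcard) e)
    _ = Fintype.card {τ : Fin n × Bool ≃ P × Bool // ∀ k b b', (τ (k, b)).1 = (τ (k, b')).1} :=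
        Fintype.card_congr ((Equiv.equivCongr (.refl _) E).subtypeEquiv fun _ => Iff.rfl)
    _ = Fintype.card ((Fin n ≃ P) × (Fin n → Equiv.Perm Bool)) :=
        (Fintype.card_congr Equiv.prodShearEquiv).symm
    _ = 2 ^ n * n ! := by
      rw [Fintype.card_prod, Fintype.card_equiv (Fintype.equivOfCardEq (by simp [hcard])),
        Fintype.card_pi]
      simp [Fintype.card_perm, mul_comm]

lemma sum_pairBlocks {M : Type*} [AddCommMonoid M] (F : Finset (Finset (Fin (2 * n))) → M) :
    ∑ e : Fin n × Bool ≃ Fin (2 * n), F (pairBlocks e) =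
      (2 ^ n * n !) • ∑ P ∈ pairPartitions n, F P := by
  rw [← sum_fiberwise_of_maps_to (fun e _ => pairBlocks_mem_pairPartitions e), smul_sum]
  refine sum_congr rfl fun P hP => ?_
  rw [sum_congr rfl fun e he => congrArg F (mem_filter.mp he).2, sum_const,
    card_filter_pairBlocks_eq hP]

end PairPartitions

lemma MeasureTheory.integrable_finset_prod_of_memLp {ι Ω : Type*} [MeasurableSpace Ω]
    {μ : Measure Ω} [IsFiniteMeasure μ] {f : ι → Ω → ℝ} (s : Finset ι)
    (hf : ∀ i ∈ s, MemLp (f i) s.card μ) :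
    Integrable (fun ω => ∏ i ∈ s, f i ω) μ := by
  rcases s.eq_empty_or_nonempty with rfl | hs
  · simp
  have h := MemLp.prod' hf
  rwa [Finset.sum_const, nsmul_eq_mul, ENNReal.mul_inv_cancel (by simpa using hs.ne_empty)
    (ENNReal.natCast_ne_top _), inv_one, memLp_one_iff_integrable] at h

namespace ProbabilityTheory

lemma hasDerivAt_gaussianPDFReal (μ : ℝ) (v : ℝ≥0) (x : ℝ) :
    HasDerivAt (gaussianPDFReal μ v) (-((x - μ) / v) * gaussianPDFReal μ v x) x := by
  have h := ((((hasDerivAt_id x).sub_const μ).pow 2).neg.div_const (2 * (v : ℝ))).exp.const_mul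
    (√(2 * Real.pi * v))⁻¹
  refine (h.congr_of_eventuallyEq (.of_forall fun y => ?_)).congr_deriv ?_ <;>
    simp only [gaussianPDFReal_def, Pi.neg_apply, Pi.pow_apply, id]
  ring

lemma integrable_pow_gaussianReal (μ : ℝ) (v : ℝ≥0) (k : ℕ) :
    Integrable (fun x : ℝ => x ^ k) (gaussianReal μ v) := by
  refine (integrable_norm_iff (by fun_prop)).mp ?_
  simpa [norm_pow] using (memLp_id_gaussianReal (μ := μ) (v := v) k).integrable_norm_pow'

lemma integrable_pow_mul_gaussianPDFReal (μ : ℝ) (v : ℝ≥0) (k : ℕ) :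
    Integrable (fun x : ℝ => x ^ k * gaussianPDFReal μ v x) := by
  by_cases hv : v = 0
  · simp [hv]
  have h := integrable_pow_gaussianReal μ v k
  rw [gaussianReal_of_var_ne_zero _ hv, integrable_withDensity_iff_integrable_smul'
    (measurable_gaussianPDF μ v) (.of_forall fun _ => gaussianPDF_lt_top)] at h
  simpa [toReal_gaussianPDF, mul_comm] using h

/-- Integrate `x ^ (k + 1)` by parts against `x ρ = -v ρ'`, where `ρ` is the centred density. -/
lemma integral_pow_add_two_gaussianReal (v : ℝ≥0) (k : ℕ) :
    ∫ x, x ^ (k + 2) ∂gaussianReal 0 v = (k + 1) * v * ∫ x, x ^ k ∂gaussianReal 0 v := by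
  by_cases hv : v = 0
  · simp [hv]
  set ρ := gaussianPDFReal 0 v
  have hu (x : ℝ) : HasDerivAt (fun y : ℝ => y ^ (k + 1)) ((k + 1) * x ^ k) x := by
    simpa using hasDerivAt_pow (k + 1) x
  have hw (x : ℝ) : HasDerivAt (fun y => -(v * ρ y)) (x * ρ x) x := by
    refine ((hasDerivAt_gaussianPDFReal 0 v x).const_mul (v : ℝ)).fun_neg.congr_deriv ?_
    have : (v : ℝ) ≠ 0 := by exact_mod_cast hv
    field_simp
    simp [ρ]
  have hI := integrable_pow_mul_gaussianPDFReal 0 v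
  have hIBP := integral_mul_deriv_eq_deriv_mul_of_integrable (fun x _ => hu x) (fun x _ => hw x)
    ((hI (k + 2)).congr (.of_forall fun x => by simp only [Pi.mul_apply]; ring))
    (((hI k).const_mul (-((k + 1) * v))).congr
      (.of_forall fun x => by simp only [Pi.mul_apply]; ring))
    (((hI (k + 1)).const_mul (-v)).congr (.of_forall fun x => by simp only [Pi.mul_apply]; ring))
  simp only [integral_gaussianReal_eq_integral_smul hv, smul_eq_mul, ← integral_const_mul]
  calc ∫ x, ρ x * x ^ (k + 2) = ∫ x, x ^ (k + 1) * (x * ρ x) := by congr 1; ext x; ring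
    _ = _ := by rw [hIBP, ← integral_neg]; congr 1; ext x; ring

lemma integral_pow_two_mul_gaussianReal (v : ℝ≥0) (n : ℕ) :
    ∫ x, x ^ (2 * n) ∂gaussianReal 0 v = (2 * n - 1)‼ * (v : ℝ) ^ n := by
  induction n with
  | zero => simp
  | succ n ih =>
    rw [mul_add_one, integral_pow_add_two_gaussianReal, ih]
    cases n with
    | zero => simp
    | succ n =>
      rw [show 2 * (n + 1) + 2 - 1 = 2 * n + 1 + 2 by omega, Nat.doubleFactorial_add_two,
        show 2 * (n + 1) - 1 = 2 * n + 1 by omega]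
      push_cast
      ring

variable {Ω ι : Type*} [MeasurableSpace Ω] {μ : Measure Ω}

lemma memLp_of_map_eq_gaussianReal {X : Ω → ℝ} (hX : AEMeasurable X μ) {m : ℝ} {v : ℝ≥0}
    (h : μ.map X = gaussianReal m v) (p : ℝ≥0) : MemLp X p μ := by
  have := memLp_id_gaussianReal (μ := m) (v := v) p
  rwa [← h, memLp_map_measure_iff aestronglyMeasurable_id hX] at this

lemma integral_pow_two_mul_of_map_eq_gaussianReal {X : Ω → ℝ} (hX : AEMeasurable X μ)
    {v : ℝ≥0} (h : μ.map X = gaussianReal 0 v) (n : ℕ) :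
    ∫ ω, X ω ^ (2 * n) ∂μ = (2 * n - 1)‼ * (∫ ω, X ω ^ 2 ∂μ) ^ n := by
  have hmom (k : ℕ) : ∫ ω, X ω ^ (2 * k) ∂μ = (2 * k - 1)‼ * (v : ℝ) ^ k := by
    rw [← integral_pow_two_mul_gaussianReal, ← h, integral_map hX (by fun_prop)]
  have hvar : ∫ ω, X ω ^ 2 ∂μ = v := by simpa using hmom 1
  rw [hmom, hvar]

lemma integrable_prod_comp_of_memLp [IsFiniteMeasure μ] {g : ι → Ω → ℝ}
    (hg : ∀ i (p : ℝ≥0), MemLp (g i) p μ) {κ : Type*} [Fintype κ] (χ : κ → ι) :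
    Integrable (fun ω => ∏ k, g (χ k) ω) μ :=
  integrable_finset_prod_of_memLp _ fun k _ => by
    simpa using hg (χ k) (Finset.univ : Finset κ).card

lemma integral_prod_sum_mul {κ : Type*} [Fintype κ] [DecidableEq κ] [Fintype ι]
    (g : ι → Ω → ℝ) (c : ι → ℝ) (hg : ∀ χ : κ → ι, Integrable (fun ω => ∏ k, g (χ k) ω) μ) :
    ∫ ω, ∏ _k : κ, ∑ i, c i * g i ω ∂μ =
      ∑ χ : κ → ι, (∏ k, c (χ k)) * ∫ ω, ∏ k, g (χ k) ω ∂μ := by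
  simp_rw [Fintype.prod_sum, Finset.prod_mul_distrib]
  rw [integral_finsetSum _ fun χ _ => (hg χ).const_mul _]
  simp_rw [integral_const_mul]

lemma sum_mul_integral_prod_eq_doubleFactorial_mul_pow [IsFiniteMeasure μ] [Fintype ι]
    [DecidableEq ι] {g : ι → Ω → ℝ} (hmeas : ∀ i, Measurable (g i))
    (hgauss : ∀ c : ι → ℝ, ∃ v : ℝ≥0, μ.map (fun ω => ∑ i, c i * g i ω) = gaussianReal 0 v)
    (n : ℕ) (c : ι → ℝ) :
    ∑ χ : Fin (2 * n) → ι, (∏ k, c (χ k)) * ∫ ω, ∏ k, g (χ k) ω ∂μ =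
      (2 * n - 1)‼ * (∑ ψ : Bool → ι, (∏ b, c (ψ b)) * ∫ ω, ∏ b, g (ψ b) ω ∂μ) ^ n := by
  have hg (i : ι) (p : ℝ≥0) : MemLp (g i) p μ := by
    obtain ⟨v, hv⟩ := hgauss (Pi.single i 1)
    simp only [Pi.single_apply, ite_mul, one_mul, zero_mul, Finset.sum_ite_eq', Finset.mem_univ,
      if_true] at hv
    exact memLp_of_map_eq_gaussianReal (hmeas i).aemeasurable hv p
  obtain ⟨v, hv⟩ := hgauss c
  rw [← integral_prod_sum_mul g c (integrable_prod_comp_of_memLp hg),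
    ← integral_prod_sum_mul g c (integrable_prod_comp_of_memLp hg)]
  simp only [Finset.prod_const, Finset.card_univ, Fintype.card_fin, Fintype.card_bool]
  exact integral_pow_two_mul_of_map_eq_gaussianReal
    (Finset.measurable_sum _ fun i _ => (hmeas i).const_mul (c i)).aemeasurable hv n

end ProbabilityTheory

open MvPolynomial Finset in
/-- Wick's theorem: for jointly Gaussian mean-zero random variables `g₁, …, g_{2n}`,
`E[g₁⋯g_{2n}] = Σ_{pair partitions} Π_{pairs {i,j}} E[g_i g_j]`. -/
theorem stmt4 {Ω : Type*} [MeasurableSpace Ω] (μ : Measure Ω) [IsProbabilityMeasure μ]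
    (n : ℕ) (g : Fin (2 * n) → Ω → ℝ)
    (hmeas : ∀ i, Measurable (g i))
    (hgauss : ∀ c : Fin (2 * n) → ℝ, ∃ v : NNReal,
      Measure.map (fun ω => ∑ i, c i * g i ω) μ = gaussianReal 0 v) :
    (∫ ω, ∏ i, g i ω ∂μ)
      = ∑ P ∈ pairPartitions n, ∏ p ∈ P, ∫ ω, ∏ i ∈ p, g i ω ∂μ := by
  classical
  set M : (Fin (2 * n) → Fin (2 * n)) → ℝ := fun χ => ∫ ω, ∏ k, g (χ k) ω ∂μ
  set a : (Bool → Fin (2 * n)) → ℝ := fun ψ => ∫ ω, ∏ b, g (ψ b) ω ∂μ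
  have hpoly : ∑ χ, C (M χ) * ∏ k, X (χ k) =
      C ((2 * n - 1)‼ : ℝ) * (∑ ψ, C (a ψ) * ∏ b, X (ψ b)) ^ n := by
    refine MvPolynomial.funext fun c => ?_
    simpa [M, a, mul_comm] using sum_mul_integral_prod_eq_doubleFactorial_mul_pow hmeas hgauss n c
  have hcoeff := congrArg (coeff (∑ i, Finsupp.single i 1)) hpoly
  rw [coeff_sum_C_mul_prod_X, coeff_C_mul, sum_C_mul_prod_X_pow, coeff_sum_C_mul_prod_X] at hcoeff
  have hM (e : Fin (2 * n) ≃ Fin (2 * n)) : M e = ∫ ω, ∏ i, g i ω ∂μ :=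
    integral_congr_ae (.of_forall fun ω => e.prod_comp fun i => g i ω)
  have ha (e : Fin n × Bool ≃ Fin (2 * n)) :
      ∏ k, a (fun b => e (k, b)) = ∏ p ∈ pairBlocks e, ∫ ω, ∏ i ∈ p, g i ω ∂μ := by
    simp only [prod_pairBlocks, prod_pairBlock, a]
  simp only [hM, ha, sum_const, card_univ, Fintype.card_equiv (Equiv.refl _), Fintype.card_fin,
    nsmul_eq_mul] at hcoeff
  rw [sum_pairBlocks fun P => ∏ p ∈ P, ∫ ω, ∏ i ∈ p, g i ω ∂μ, nsmul_eq_mul, ← mul_assoc,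
    ← Nat.cast_mul, Nat.doubleFactorial_two_mul_sub_one_mul] at hcoeff
  exact mul_left_cancel₀ (by positivity) hcoeff
end

section
/- Criterion for absolute continuity: let μ_n and ρ_n be probability measures on a Polish space X converging weakly to μ and ρ respectively. Suppose that for every ε > 0 there exist δ(ε), η(ε) > 0 with δ(ε), η(ε) → 0 as ε → 0 such that: for every continuous F: X → ℝ with 0 < inf F ≤ F ≤ 1 satisfying μ_n({F ≤ ε}) ≥ 1 − δ(ε) for all n ≥ n₀(F), one has limsup_n ∫ F dρ_n ≤ η(ε). Then ρ is absolutely continuous with respect to μ. -/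
open MeasureTheory Filter Topology
open scoped BoundedContinuousFunction

/-!
It suffices to show `ρ K = 0` for every closed `μ`-null set `K`, by inner regularity of `ρ`.
Given `ε`, cover `K` by a closed set `C` with `μ C < δ(ε)` and take a Urysohn function `f`
equal to `1` on `K` and `0` off `C`. The test function `F = max ε f` satisfies
`μ_n {F ≤ ε} ≥ μ_n Cᶜ ≥ 1 - δ(ε)` for large `n` by the portmanteau theorem, so
`ρ K ≤ ∫ F dρ = lim ∫ F dρ_n ≤ η(ε)`, and `η(ε) → 0`.
-/

namespace MeasureTheory

variable {X : Type*} [MeasurableSpace X]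

lemma measureReal_le_integral_of_one_le {ρ : Measure X} [IsFiniteMeasure ρ] {K : Set X}
    (hK : MeasurableSet K) {f : X → ℝ} (hf : Integrable f ρ) (hf0 : ∀ x, 0 ≤ f x)
    (hf1 : ∀ x ∈ K, 1 ≤ f x) :
    ρ.real K ≤ ∫ x, f x ∂ρ := by
  rw [← integral_indicator_one hK]
  refine integral_mono ((integrable_const 1).indicator hK) hf fun x => ?_
  by_cases hx : x ∈ K
  · simpa [hx] using hf1 x hx
  · simpa [hx] using hf0 x

lemma one_sub_le_measureReal_of_compl_subset {ν : Measure X} [IsProbabilityMeasure ν]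
    {C S : Set X} (hC : MeasurableSet C) {δ : ℝ} (hCδ : ν.real C ≤ δ) (hCS : Cᶜ ⊆ S) :
    1 - δ ≤ ν.real S :=
  calc 1 - δ ≤ 1 - ν.real C := by linarith
    _ = ν.real Cᶜ := (probReal_compl_eq_one_sub hC).symm
    _ ≤ ν.real S := measureReal_mono hCS

variable [TopologicalSpace X]

lemma Measure.absolutelyContinuous_of_forall_isClosed {μ ρ : Measure X} [ρ.WeaklyRegular]
    [IsFiniteMeasure ρ] (h : ∀ K, IsClosed K → μ K = 0 → ρ K = 0) : ρ ≪ μ := by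
  refine Measure.AbsolutelyContinuous.mk fun s hs hμs => ?_
  by_contra hρs
  obtain ⟨K, hKs, hK, hρK⟩ :=
    hs.exists_lt_isClosed_of_ne_top (measure_ne_top ρ s) (pos_iff_ne_zero.mpr hρs)
  exact hρK.ne' (h K hK (measure_mono_null hKs hμs))

lemma exists_isClosed_continuous_one_zero_of_measure_lt [NormalSpace X] (μ : Measure X)
    [μ.OuterRegular] {K : Set X} (hK : IsClosed K) {r : ENNReal} (hr : μ K < r) :
    ∃ C : Set X, ∃ f : X →ᵇ ℝ, IsClosed C ∧ μ C < r ∧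
      Set.EqOn f 1 K ∧ Set.EqOn f 0 Cᶜ ∧ ∀ x, f x ∈ Set.Icc (0 : ℝ) 1 := by
  obtain ⟨U, hKU, hU, hUr⟩ := K.exists_isOpen_lt_of_lt r hr
  obtain ⟨V, hV, hKV, hVU⟩ := normal_exists_closure_subset hK hU hKU
  obtain ⟨f, hf0, hf1, hf01⟩ := exists_bounded_zero_one_of_closed hV.isClosed_compl hK
    (Set.disjoint_compl_left_iff_subset.mpr hKV)
  refine ⟨closure V, f, isClosed_closure, (measure_mono hVU).trans_lt hUr, hf1,
    fun x hx => hf0 fun hxV => hx (subset_closure hxV), hf01⟩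

lemma ProbabilityMeasure.eventually_measure_lt_of_tendsto [OpensMeasurableSpace X]
    [HasOuterApproxClosed X] {ι : Type*} {L : Filter ι} {μs : ι → ProbabilityMeasure X}
    {μ : ProbabilityMeasure X} (hμ : Tendsto μs L (𝓝 μ)) {C : Set X} (hC : IsClosed C)
    {r : ENNReal} (hr : (μ : Measure X) C < r) : ∀ᶠ i in L, (μs i : Measure X) C < r :=
  eventually_lt_of_limsup_lt ((limsup_measure_closed_le_of_tendsto hμ hC).trans_lt hr)

lemma measureReal_le_of_forall_limsup_integral_le [NormalSpace X] [OpensMeasurableSpace X]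
    [HasOuterApproxClosed X] {μs : ℕ → ProbabilityMeasure X} {μ : ProbabilityMeasure X}
    [(μ : Measure X).OuterRegular] (hμ : Tendsto μs atTop (𝓝 μ)) {ρs : ℕ → Measure X}
    {ρ : Measure X} [IsFiniteMeasure ρ]
    (hρ : ∀ G : X →ᵇ ℝ, Tendsto (fun n => ∫ x, G x ∂(ρs n)) atTop (𝓝 (∫ x, G x ∂ρ)))
    {ε δ η : ℝ} (hε : 0 < ε) (hε1 : ε ≤ 1)
    (hcrit : ∀ F : X → ℝ, Continuous F → (∃ a : ℝ, 0 < a ∧ ∀ x, a ≤ F x) → (∀ x, F x ≤ 1) →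
      (∃ n₀ : ℕ, ∀ n ≥ n₀, 1 - δ ≤ ((μs n : Measure X) {x | F x ≤ ε}).toReal) →
      limsup (fun n => ∫ x, F x ∂(ρs n)) atTop ≤ η)
    {K : Set X} (hK : IsClosed K) (hμK : (μ : Measure X) K < ENNReal.ofReal δ) :
    ρ.real K ≤ η := by
  have hδ : 0 ≤ δ := (ENNReal.ofReal_pos.mp (pos_of_gt hμK)).le
  obtain ⟨C, f, hC, hμC, hf1, hf0, hf01⟩ :=
    exists_isClosed_continuous_one_zero_of_measure_lt (μ : Measure X) hK hμK
  let F : X →ᵇ ℝ := BoundedContinuousFunction.const X ε ⊔ f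
  have hF : ∀ x, F x = max ε (f x) := fun _ => rfl
  have hεF : ∀ x, ε ≤ F x := fun x => (hF x).symm ▸ le_max_left _ _
  have hF1 : ∀ x, F x ≤ 1 := fun x => (hF x).symm ▸ max_le hε1 (hf01 x).2
  have hμF : ∃ n₀ : ℕ, ∀ n ≥ n₀, 1 - δ ≤ ((μs n : Measure X) {x | F x ≤ ε}).toReal := by
    obtain ⟨n₀, hn₀⟩ := eventually_atTop.mp
      (ProbabilityMeasure.eventually_measure_lt_of_tendsto hμ hC hμC)
    refine ⟨n₀, fun n hn => one_sub_le_measureReal_of_compl_subset hC.measurableSet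
      (ENNReal.toReal_le_of_le_ofReal hδ (hn₀ n hn).le) fun x hx => ?_⟩
    simp [hF, hf0 hx, hε.le]
  calc ρ.real K ≤ ∫ x, F x ∂ρ :=
        measureReal_le_integral_of_one_le hK.measurableSet (F.integrable ρ)
          (fun x => hε.le.trans (hεF x)) fun x hx => by simp [hF, hf1 hx]
    _ = limsup (fun n => ∫ x, F x ∂(ρs n)) atTop := (hρ F).limsup_eq.symm
    _ ≤ η := hcrit F F.continuous ⟨ε, hε, hεF⟩ hF1 hμF

end MeasureTheory

theorem stmt19_general {X : Type*} [MetricSpace X]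
    [MeasurableSpace X] [BorelSpace X]
    (μn ρn : ℕ → Measure X) (μ ρ : Measure X)
    (hμn : ∀ n, IsProbabilityMeasure (μn n))
    (hμ : IsProbabilityMeasure μ) (hρ : IsProbabilityMeasure ρ)
    (hμconv : ∀ G : BoundedContinuousFunction X ℝ,
      Tendsto (fun n => ∫ x, G x ∂(μn n)) atTop (𝓝 (∫ x, G x ∂μ)))
    (hρconv : ∀ G : BoundedContinuousFunction X ℝ,
      Tendsto (fun n => ∫ x, G x ∂(ρn n)) atTop (𝓝 (∫ x, G x ∂ρ)))
    (hmain : ∃ δ η : ℝ → ℝ,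
      (∀ ε : ℝ, 0 < ε → 0 < δ ε ∧ 0 < η ε) ∧
      Tendsto δ (𝓝[>] (0 : ℝ)) (𝓝 0) ∧ Tendsto η (𝓝[>] (0 : ℝ)) (𝓝 0) ∧
      ∀ ε : ℝ, 0 < ε → ∀ F : X → ℝ, Continuous F →
        (∃ a : ℝ, 0 < a ∧ ∀ x, a ≤ F x) → (∀ x, F x ≤ 1) →
        (∃ n₀ : ℕ, ∀ n ≥ n₀, 1 - δ ε ≤ ((μn n) {x | F x ≤ ε}).toReal) →
        limsup (fun n => ∫ x, F x ∂(ρn n)) atTop ≤ η ε) :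
    ρ ≪ μ := by
  obtain ⟨δ, η, hδη, -, hη, hcrit⟩ := hmain
  let μs : ℕ → ProbabilityMeasure X := fun n => ⟨μn n, hμn n⟩
  let P : ProbabilityMeasure X := ⟨μ, hμ⟩
  have hμs : Tendsto μs atTop (𝓝 P) :=
    ProbabilityMeasure.tendsto_iff_forall_integral_tendsto.mpr hμconv
  refine Measure.absolutelyContinuous_of_forall_isClosed fun K hK hμK => ?_
  have hρK : ∀ᶠ ε in 𝓝[>] 0, ρ.real K ≤ η ε := by
    filter_upwards [Ioo_mem_nhdsGT one_pos] with ε ⟨hε, hε1⟩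
    exact measureReal_le_of_forall_limsup_integral_le hμs hρconv hε hε1.le (hcrit ε hε) hK
      (show μ K < _ from hμK ▸ ENNReal.ofReal_pos.mpr (hδη ε hε).1)
  exact (measureReal_eq_zero_iff).mp (le_antisymm (ge_of_tendsto hη hρK) measureReal_nonneg)

/-- Criterion for absolute continuity (Lemma C.1 of Oh–Okamoto–Tolomeo): if probability
measures `μ_n → μ` and `ρ_n → ρ` weakly on a Polish space `X`, and for every `ε > 0` there
are `δ(ε), η(ε) > 0` tending to `0` as `ε → 0⁺` such that every continuous `F : X → ℝ` with
`0 < inf F ≤ F ≤ 1` and `μ_n({F ≤ ε}) ≥ 1 − δ(ε)` for large `n` satisfies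
`limsup_n ∫ F dρ_n ≤ η(ε)`, then `ρ ≪ μ`. -/
theorem stmt19 {X : Type*} [MetricSpace X] [TopologicalSpace.SeparableSpace X]
    [CompleteSpace X] [MeasurableSpace X] [BorelSpace X]
    (μn ρn : ℕ → Measure X) (μ ρ : Measure X)
    (hμn : ∀ n, IsProbabilityMeasure (μn n)) (hρn : ∀ n, IsProbabilityMeasure (ρn n))
    (hμ : IsProbabilityMeasure μ) (hρ : IsProbabilityMeasure ρ)
    (hμconv : ∀ G : BoundedContinuousFunction X ℝ,
      Tendsto (fun n => ∫ x, G x ∂(μn n)) atTop (𝓝 (∫ x, G x ∂μ)))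
    (hρconv : ∀ G : BoundedContinuousFunction X ℝ,
      Tendsto (fun n => ∫ x, G x ∂(ρn n)) atTop (𝓝 (∫ x, G x ∂ρ)))
    (hmain : ∃ δ η : ℝ → ℝ,
      (∀ ε : ℝ, 0 < ε → 0 < δ ε ∧ 0 < η ε) ∧
      Tendsto δ (𝓝[>] (0 : ℝ)) (𝓝 0) ∧ Tendsto η (𝓝[>] (0 : ℝ)) (𝓝 0) ∧
      ∀ ε : ℝ, 0 < ε → ∀ F : X → ℝ, Continuous F →
        (∃ a : ℝ, 0 < a ∧ ∀ x, a ≤ F x) → (∀ x, F x ≤ 1) →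
        (∃ n₀ : ℕ, ∀ n ≥ n₀, 1 - δ ε ≤ ((μn n) {x | F x ≤ ε}).toReal) →
        limsup (fun n => ∫ x, F x ∂(ρn n)) atTop ≤ η ε) :
    ρ ≪ μ :=
  stmt19_general μn ρn μ ρ hμn hμ hρ hμconv hρconv hmain
end
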